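/- A Banach algebra A is pseudo-contractible if and only if A is approximately biprojective and has a central approximate identity. -/
import Mathlib


open Filter Topology TensorProduct

noncomputable section


open Filter Topology TensorProduct


/-! Banach bimodules and derivations -/

variable (A : Type) [NonUnitalNormedRing A] [NormedSpace ℂ A]
  [IsScalarTower ℂ A A] [SMulCommClass ℂ A A]

/-- A Banach `A`-bimodule structure on a Banach space `X`: `l a` is the left action of `a`,
`r a` is the right action of `a`. -/
structure BanachBimod (X : Type) [NormedAddCommGroup X] [NormedSpace ℂ X] where
  l : A → X →L[ℂ] X
  r : A → X →L[ℂ] X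
  l_add : ∀ a b, l (a + b) = l a + l b
  l_smul : ∀ (c : ℂ) a, l (c • a) = c • l a
  r_add : ∀ a b, r (a + b) = r a + r b
  r_smul : ∀ (c : ℂ) a, r (c • a) = c • r a
  l_bound : ∃ C : ℝ, ∀ a, ‖l a‖ ≤ C * ‖a‖
  r_bound : ∃ C : ℝ, ∀ a, ‖r a‖ ≤ C * ‖a‖
  l_mul : ∀ a b, l (a * b) = (l a).comp (l b)
  r_mul : ∀ a b, r (a * b) = (r b).comp (r a)
  lr_comm : ∀ a b, (l a).comp (r b) = (r b).comp (l a)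

variable {A}

namespace BanachBimod

variable {X : Type} [NormedAddCommGroup X] [NormedSpace ℂ X]

/-- The dual bimodule structure on `X →L[ℂ] ℂ`. -/
def dual (M : BanachBimod A X) : BanachBimod A (X →L[ℂ] ℂ) where
  l a := (ContinuousLinearMap.compL ℂ X X ℂ).flip (M.r a)
  r a := (ContinuousLinearMap.compL ℂ X X ℂ).flip (M.l a)
  l_add a b := by simp only [M.r_add, map_add]
  l_smul c a := by simp only [M.r_smul, map_smul]
  r_add a b := by simp only [M.l_add, map_add]
  r_smul c a := by simp only [M.l_smul, map_smul]
  l_bound := by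
    obtain ⟨C, hC⟩ := M.r_bound
    refine ⟨‖(ContinuousLinearMap.compL ℂ X X ℂ).flip‖ * C, fun a => ?_⟩
    calc ‖(ContinuousLinearMap.compL ℂ X X ℂ).flip (M.r a)‖
        ≤ ‖(ContinuousLinearMap.compL ℂ X X ℂ).flip‖ * ‖M.r a‖ :=
          (ContinuousLinearMap.compL ℂ X X ℂ).flip.le_opNorm _
      _ ≤ ‖(ContinuousLinearMap.compL ℂ X X ℂ).flip‖ * (C * ‖a‖) := by
          exact mul_le_mul_of_nonneg_left (hC a) (norm_nonneg _)
      _ = ‖(ContinuousLinearMap.compL ℂ X X ℂ).flip‖ * C * ‖a‖ := by ring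
  r_bound := by
    obtain ⟨C, hC⟩ := M.l_bound
    refine ⟨‖(ContinuousLinearMap.compL ℂ X X ℂ).flip‖ * C, fun a => ?_⟩
    calc ‖(ContinuousLinearMap.compL ℂ X X ℂ).flip (M.l a)‖
        ≤ ‖(ContinuousLinearMap.compL ℂ X X ℂ).flip‖ * ‖M.l a‖ :=
          (ContinuousLinearMap.compL ℂ X X ℂ).flip.le_opNorm _
      _ ≤ ‖(ContinuousLinearMap.compL ℂ X X ℂ).flip‖ * (C * ‖a‖) := by
          exact mul_le_mul_of_nonneg_left (hC a) (norm_nonneg _)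
      _ = ‖(ContinuousLinearMap.compL ℂ X X ℂ).flip‖ * C * ‖a‖ := by ring
  l_mul a b := by
    ext φ x
    simp [M.r_mul]
  r_mul a b := by
    ext φ x
    simp [M.l_mul]
  lr_comm a b := by
    ext φ x
    simpa using congrArg φ (congrFun (congrArg DFunLike.coe (M.lr_comm b a)) x)

/-- A continuous derivation from `A` into the bimodule `X`. -/
def IsDerivation (M : BanachBimod A X) (D : A →L[ℂ] X) : Prop :=
  ∀ a b, D (a * b) = M.l a (D b) + M.r b (D a)

/-- `D` is inner. -/
def Inner (M : BanachBimod A X) (D : A →L[ℂ] X) : Prop :=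
  ∃ x : X, ∀ a, D a = M.l a x - M.r a x

/-- `D` is approximately inner: some net of inner derivations converges to `D` pointwise
in norm. -/
def ApproxInner (M : BanachBimod A X) (D : A →L[ℂ] X) : Prop :=
  ∃ (ι : Type) (φ : Filter ι) (x : ι → X), φ.NeBot ∧
    ∀ a, Tendsto (fun i => M.l a (x i) - M.r a (x i)) φ (𝓝 (D a))

/-- `D` is sequentially approximately inner. -/
def SeqApproxInner (M : BanachBimod A X) (D : A →L[ℂ] X) : Prop :=
  ∃ x : ℕ → X, ∀ a, Tendsto (fun n => M.l a (x n) - M.r a (x n)) atTop (𝓝 (D a))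

/-- `D` is boundedly approximately inner: the approximating net of inner derivations is
bounded as a net of operators from `A` to `X`. -/
def BddApproxInner (M : BanachBimod A X) (D : A →L[ℂ] X) : Prop :=
  ∃ (ι : Type) (φ : Filter ι) (x : ι → X), φ.NeBot ∧
    (∃ C : ℝ, ∀ i a, ‖M.l a (x i) - M.r a (x i)‖ ≤ C * ‖a‖) ∧
    ∀ a, Tendsto (fun i => M.l a (x i) - M.r a (x i)) φ (𝓝 (D a))

/-- `D` is uniformly approximately inner: inner derivations approximate `D` uniformly
on the unit ball of `A`, i.e. in operator norm. -/
def UnifApproxInner (M : BanachBimod A X) (D : A →L[ℂ] X) : Prop :=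
  ∃ (ι : Type) (φ : Filter ι) (x : ι → X), φ.NeBot ∧
    ∀ ε > (0 : ℝ), ∀ᶠ i in φ, ∀ a, ‖D a - (M.l a (x i) - M.r a (x i))‖ ≤ ε * ‖a‖

/-- A derivation into the dual module `X →L[ℂ] ℂ` is weak* approximately inner. -/
def WeakStarApproxInner (M : BanachBimod A X) (D : A →L[ℂ] (X →L[ℂ] ℂ)) : Prop :=
  ∃ (ι : Type) (φ : Filter ι) (x : ι → (X →L[ℂ] ℂ)), φ.NeBot ∧
    ∀ (a : A) (ξ : X),
      Tendsto (fun i => (M.dual.l a (x i) - M.dual.r a (x i)) ξ) φ (𝓝 (D a ξ))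

end BanachBimod

variable (A)

/-- `A` is contractible: every continuous derivation into every Banach `A`-bimodule is inner. -/
def Contractible : Prop :=
  ∀ (X : Type) (_ : NormedAddCommGroup X) (_ : NormedSpace ℂ X) (M : BanachBimod A X)
    (D : A →L[ℂ] X), M.IsDerivation D → M.Inner D

def ApproximatelyContractible : Prop :=
  ∀ (X : Type) (_ : NormedAddCommGroup X) (_ : NormedSpace ℂ X) (M : BanachBimod A X)
    (D : A →L[ℂ] X), M.IsDerivation D → M.ApproxInner D

def SeqApproximatelyContractible : Prop :=
  ∀ (X : Type) (_ : NormedAddCommGroup X) (_ : NormedSpace ℂ X) (M : BanachBimod A X)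
    (D : A →L[ℂ] X), M.IsDerivation D → M.SeqApproxInner D

def UnifApproximatelyContractible : Prop :=
  ∀ (X : Type) (_ : NormedAddCommGroup X) (_ : NormedSpace ℂ X) (M : BanachBimod A X)
    (D : A →L[ℂ] X), M.IsDerivation D → M.UnifApproxInner D

def ApproximatelyAmenable : Prop :=
  ∀ (X : Type) (_ : NormedAddCommGroup X) (_ : NormedSpace ℂ X) (M : BanachBimod A X)
    (D : A →L[ℂ] (X →L[ℂ] ℂ)), M.dual.IsDerivation D → M.dual.ApproxInner D

def SeqApproximatelyAmenable : Prop :=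
  ∀ (X : Type) (_ : NormedAddCommGroup X) (_ : NormedSpace ℂ X) (M : BanachBimod A X)
    (D : A →L[ℂ] (X →L[ℂ] ℂ)), M.dual.IsDerivation D → M.dual.SeqApproxInner D

def BddApproximatelyAmenable : Prop :=
  ∀ (X : Type) (_ : NormedAddCommGroup X) (_ : NormedSpace ℂ X) (M : BanachBimod A X)
    (D : A →L[ℂ] (X →L[ℂ] ℂ)), M.dual.IsDerivation D → M.dual.BddApproxInner D

def WeakStarApproximatelyAmenable : Prop :=
  ∀ (X : Type) (_ : NormedAddCommGroup X) (_ : NormedSpace ℂ X) (M : BanachBimod A X)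
    (D : A →L[ℂ] (X →L[ℂ] ℂ)), M.dual.IsDerivation D → M.WeakStarApproxInner D


/-- The projective tensor "seminorm" on the algebraic tensor product `V ⊗[ℂ] W`, relative to
given (semi)norm functions on the factors: the infimum of `∑ να aₙ * νβ bₙ` over all
representations `t = ∑ aₙ ⊗ bₙ`. -/
def projTensorSN {V W : Type} [AddCommGroup V] [Module ℂ V] [AddCommGroup W] [Module ℂ W]
    (να : V → ℝ) (νβ : W → ℝ) (t : V ⊗[ℂ] W) : ℝ :=
  sInf {r : ℝ | ∃ L : List (V × W), t = (L.map fun p => p.1 ⊗ₜ[ℂ] p.2).sum ∧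
      r = (L.map fun p => να p.1 * νβ p.2).sum}

section SN

variable (C : Type) [NonUnitalRing C] [Module ℂ C] [IsScalarTower ℂ C C] [SMulCommClass ℂ C C]

/-- The left action `u ↦ a·u` of `C` on `C ⊗[ℂ] C`. -/
def tactL (a : C) : C ⊗[ℂ] C →ₗ[ℂ] C ⊗[ℂ] C :=
  TensorProduct.map (LinearMap.mulLeft ℂ a) LinearMap.id

/-- The right action `u ↦ u·a` of `C` on `C ⊗[ℂ] C`. -/
def tactR (a : C) : C ⊗[ℂ] C →ₗ[ℂ] C ⊗[ℂ] C :=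
  TensorProduct.map LinearMap.id (LinearMap.mulRight ℂ a)

/-- The multiplication map `π : C ⊗ C → C`. -/
def tpi : C ⊗[ℂ] C →ₗ[ℂ] C := LinearMap.mul' ℂ C

variable (ν : C → ℝ)

/-- Pseudo-amenability of the algebra `C` relative to the (semi)norm function `ν`:
there is an approximate diagonal, i.e. a net `(u_i) ⊂ C ⊗̂ C` with
`a·u_i − u_i·a → 0` (in the projective tensor seminorm) and `π(u_i)a → a` for all `a ∈ C`. -/
def PseudoAmenableSN : Prop :=
  ∃ (ι : Type) (φ : Filter ι) (u : ι → C ⊗[ℂ] C), φ.NeBot ∧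
    (∀ a : C, Tendsto (fun i => projTensorSN ν ν (tactL C a (u i) - tactR C a (u i))) φ (𝓝 0)) ∧
    (∀ a : C, Tendsto (fun i => ν (tpi C (u i) * a - a)) φ (𝓝 0))

/-- Sequential pseudo-amenability. -/
def SeqPseudoAmenableSN : Prop :=
  ∃ u : ℕ → C ⊗[ℂ] C,
    (∀ a : C, Tendsto (fun n => projTensorSN ν ν (tactL C a (u n) - tactR C a (u n))) atTop (𝓝 0)) ∧
    (∀ a : C, Tendsto (fun n => ν (tpi C (u n) * a - a)) atTop (𝓝 0))

/-- Pseudo-contractibility: there is a central approximate diagonal. -/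
def PseudoContractibleSN : Prop :=
  ∃ (ι : Type) (φ : Filter ι) (u : ι → C ⊗[ℂ] C), φ.NeBot ∧
    (∀ (a : C) i, tactL C a (u i) = tactR C a (u i)) ∧
    (∀ a : C, Tendsto (fun i => ν (tpi C (u i) * a - a)) φ (𝓝 0))

/-- Bounded pseudo-contractibility: a central approximate diagonal `(u_i)` such that
`(π(u_i))` is a multiplier-bounded approximate identity. -/
def BddPseudoContractibleSN : Prop :=
  ∃ (ι : Type) (φ : Filter ι) (u : ι → C ⊗[ℂ] C), φ.NeBot ∧
    (∀ (a : C) i, tactL C a (u i) = tactR C a (u i)) ∧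
    (∀ a : C, Tendsto (fun i => ν (tpi C (u i) * a - a)) φ (𝓝 0)) ∧
    (∃ K : ℝ, 0 < K ∧ ∀ i (a : C), ν (tpi C (u i) * a) ≤ K * ν a)

end SN

section Normed

variable (A : Type) [NonUnitalNormedRing A] [NormedSpace ℂ A]
  [IsScalarTower ℂ A A] [SMulCommClass ℂ A A]

def PseudoAmenable : Prop := PseudoAmenableSN A (fun a => ‖a‖)
def SeqPseudoAmenable : Prop := SeqPseudoAmenableSN A (fun a => ‖a‖)
def PseudoContractible : Prop := PseudoContractibleSN A (fun a => ‖a‖)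
def BddPseudoContractible : Prop := BddPseudoContractibleSN A (fun a => ‖a‖)

/-- `A` has a (two-sided) approximate identity. -/
def HasApproxIdentity : Prop :=
  ∃ (ι : Type) (φ : Filter ι) (e : ι → A), φ.NeBot ∧
    ∀ a : A, Tendsto (fun i => e i * a) φ (𝓝 a) ∧ Tendsto (fun i => a * e i) φ (𝓝 a)

/-- `A` has a bounded (two-sided) approximate identity. -/
def HasBoundedApproxIdentity : Prop :=
  ∃ (ι : Type) (φ : Filter ι) (e : ι → A), φ.NeBot ∧ (∃ C : ℝ, ∀ i, ‖e i‖ ≤ C) ∧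
    ∀ a : A, Tendsto (fun i => e i * a) φ (𝓝 a) ∧ Tendsto (fun i => a * e i) φ (𝓝 a)

/-- `A` has a left approximate identity. -/
def HasLeftApproxIdentity : Prop :=
  ∃ (ι : Type) (φ : Filter ι) (e : ι → A), φ.NeBot ∧
    ∀ a : A, Tendsto (fun i => e i * a) φ (𝓝 a)

/-- `A` has a right approximate identity. -/
def HasRightApproxIdentity : Prop :=
  ∃ (ι : Type) (φ : Filter ι) (e : ι → A), φ.NeBot ∧
    ∀ a : A, Tendsto (fun i => a * e i) φ (𝓝 a)

/-- `A` has a central approximate identity. -/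
def HasCentralApproxIdentity : Prop :=
  ∃ (ι : Type) (φ : Filter ι) (e : ι → A), φ.NeBot ∧
    (∀ (a : A) i, a * e i = e i * a) ∧
    ∀ a : A, Tendsto (fun i => e i * a) φ (𝓝 a)

/-- `A` is approximately biprojective: there is a net `(T_α)` of bounded `A`-bimodule morphisms
`A → A ⊗̂ A` with `π ∘ T_α (a) → a` for every `a`. -/
def ApproxBiprojective : Prop :=
  ∃ (ι : Type) (φ : Filter ι) (T : ι → (A →ₗ[ℂ] A ⊗[ℂ] A)), φ.NeBot ∧
    (∀ i, ∃ C : ℝ, ∀ a, projTensorSN (fun x : A => ‖x‖) (fun x : A => ‖x‖) (T i a) ≤ C * ‖a‖) ∧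
    (∀ i (a b : A), T i (a * b) = tactL A a (T i b) ∧ T i (a * b) = tactR A b (T i a)) ∧
    (∀ a : A, Tendsto (fun i => tpi A (T i a)) φ (𝓝 a))

end Normed


end


section AuxLemmas

open Filter Topology TensorProduct

variable {C : Type} [NonUnitalRing C] [Module ℂ C] [IsScalarTower ℂ C C] [SMulCommClass ℂ C C]

lemma tactL_tmul (a x y : C) : tactL C a (x ⊗ₜ[ℂ] y) = (a * x) ⊗ₜ[ℂ] y := rfl

lemma tactR_tmul (a x y : C) : tactR C a (x ⊗ₜ[ℂ] y) = x ⊗ₜ[ℂ] (y * a) := rfl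

lemma tpi_tactL (a : C) (t : C ⊗[ℂ] C) : tpi C (tactL C a t) = a * tpi C t := by
  induction t using TensorProduct.induction_on with
  | zero => simp
  | tmul x y => simp [tactL, tpi, mul_assoc]
  | add u v hu hv => simp only [map_add, hu, hv, mul_add]

lemma tpi_tactR (a : C) (t : C ⊗[ℂ] C) : tpi C (tactR C a t) = tpi C t * a := by
  induction t using TensorProduct.induction_on with
  | zero => simp
  | tmul x y => simp [tactR, tpi, mul_assoc]
  | add u v hu hv => simp only [map_add, hu, hv, add_mul]

lemma tactL_tactR_comm (a b : C) (t : C ⊗[ℂ] C) :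
    tactL C a (tactR C b t) = tactR C b (tactL C a t) := by
  induction t using TensorProduct.induction_on with
  | zero => simp
  | tmul x y => rfl
  | add u v hu hv => simp only [map_add, hu, hv]

lemma tactR_add' (a b : C) (t : C ⊗[ℂ] C) :
    tactR C (a + b) t = tactR C a t + tactR C b t := by
  induction t using TensorProduct.induction_on with
  | zero => simp
  | tmul x y => simp only [tactR_tmul, mul_add, TensorProduct.tmul_add]
  | add u v hu hv =>
      simp only [map_add, hu, hv]; abel

lemma tactR_smul' (c : ℂ) (a : C) (t : C ⊗[ℂ] C) :
    tactR C (c • a) t = c • tactR C a t := by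
  induction t using TensorProduct.induction_on with
  | zero => simp
  | tmul x y => simp only [tactR_tmul, mul_smul_comm, TensorProduct.tmul_smul]
  | add u v hu hv => simp only [map_add, hu, hv, smul_add]

lemma tactR_mul' (a b : C) (t : C ⊗[ℂ] C) :
    tactR C (a * b) t = tactR C b (tactR C a t) := by
  induction t using TensorProduct.induction_on with
  | zero => simp
  | tmul x y => simp only [tactR_tmul, mul_assoc]
  | add u v hu hv => simp only [map_add, hu, hv]

lemma exists_list_rep (t : C ⊗[ℂ] C) :
    ∃ L : List (C × C), t = (L.map fun p => p.1 ⊗ₜ[ℂ] p.2).sum := by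
  induction t using TensorProduct.induction_on with
  | zero => exact ⟨[], by simp⟩
  | tmul x y => exact ⟨[(x, y)], by simp⟩
  | add u v hu hv =>
      obtain ⟨L1, h1⟩ := hu
      obtain ⟨L2, h2⟩ := hv
      exact ⟨L1 ++ L2, by simp [h1, h2]⟩

variable {A : Type} [NonUnitalNormedRing A] [NormedSpace ℂ A]
  [IsScalarTower ℂ A A] [SMulCommClass ℂ A A]

lemma projTensorSN_le_of_rep (L : List (A × A)) :
    projTensorSN (fun x : A => ‖x‖) (fun x : A => ‖x‖)
      ((L.map fun p => p.1 ⊗ₜ[ℂ] p.2).sum) ≤ (L.map fun p => ‖p.1‖ * ‖p.2‖).sum := by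
  apply csInf_le
  · refine ⟨0, ?_⟩
    rintro r ⟨L', -, rfl⟩
    apply List.sum_nonneg
    intro x hx
    simp only [List.mem_map] at hx
    obtain ⟨p, -, rfl⟩ := hx
    exact mul_nonneg (norm_nonneg _) (norm_nonneg _)
  · exact ⟨L, rfl, rfl⟩

lemma list_norm_sum_mul (a : A) (L : List (A × A)) :
    (L.map fun p => ‖p.1‖ * ‖p.2 * a‖).sum ≤ (L.map fun p => ‖p.1‖ * ‖p.2‖).sum * ‖a‖ := by
  induction L with
  | nil => simp
  | cons p L ih =>
      simp only [List.map_cons, List.sum_cons, add_mul]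
      refine add_le_add ?_ ih
      calc ‖p.1‖ * ‖p.2 * a‖ ≤ ‖p.1‖ * (‖p.2‖ * ‖a‖) :=
            mul_le_mul_of_nonneg_left (norm_mul_le _ _) (norm_nonneg _)
        _ = ‖p.1‖ * ‖p.2‖ * ‖a‖ := by ring

end AuxLemmas

/-- A Banach algebra `A` is pseudo-contractible if and only if `A` is
approximately biprojective and has a central approximate identity. -/
theorem pseudoContractible_iff_approxBiprojective_and_centralAI
    (A : Type) [NonUnitalNormedRing A] [NormedSpace ℂ A]
    [IsScalarTower ℂ A A] [SMulCommClass ℂ A A] [CompleteSpace A] :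
    PseudoContractible A ↔ ApproxBiprojective A ∧ HasCentralApproxIdentity A := by
  constructor
  · rintro ⟨ι, φ, u, hne, hcent, happ⟩
    have hcomm : ∀ (a : A) i, a * tpi A (u i) = tpi A (u i) * a := by
      intro a i
      rw [← tpi_tactL a (u i), hcent a i, tpi_tactR]
    constructor
    · refine ⟨ι, φ, fun i =>
        { toFun := fun a => tactR A a (u i)
          map_add' := fun a b => tactR_add' a b (u i)
          map_smul' := fun c a => tactR_smul' c a (u i) }, hne, ?_, ?_, ?_⟩
      · intro i
        obtain ⟨L, hL⟩ := exists_list_rep (u i)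
        refine ⟨(L.map fun p => ‖p.1‖ * ‖p.2‖).sum, fun a => ?_⟩
        have hrep : tactR A a (u i)
            = ((L.map fun p => (p.1, p.2 * a)).map fun p => p.1 ⊗ₜ[ℂ] p.2).sum := by
          rw [hL, map_list_sum, List.map_map, List.map_map]
          rfl
        calc projTensorSN (fun x : A => ‖x‖) (fun x : A => ‖x‖) (tactR A a (u i))
            ≤ ((L.map fun p => (p.1, p.2 * a)).map fun p => ‖p.1‖ * ‖p.2‖).sum := by
              rw [hrep]; exact projTensorSN_le_of_rep _
          _ = (L.map fun p => ‖p.1‖ * ‖p.2 * a‖).sum := by rw [List.map_map]; rfl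
          _ ≤ (L.map fun p => ‖p.1‖ * ‖p.2‖).sum * ‖a‖ := list_norm_sum_mul a L
      · intro i a b
        constructor
        · show tactR A (a * b) (u i) = tactL A a (tactR A b (u i))
          rw [tactR_mul', ← hcent a i, ← tactL_tactR_comm]
        · show tactR A (a * b) (u i) = tactR A b (tactR A a (u i))
          exact tactR_mul' a b (u i)
      · intro a
        have : (fun i => tpi A (tactR A a (u i))) = fun i => tpi A (u i) * a := by
          funext i; exact tpi_tactR a (u i)
        show Tendsto (fun i => tpi A (tactR A a (u i))) φ (𝓝 a)
        rw [this, tendsto_iff_norm_sub_tendsto_zero]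
        exact happ a
    · refine ⟨ι, φ, fun i => tpi A (u i), hne, hcomm, fun a => ?_⟩
      have : (fun i => tpi A (u i) * a) = fun i => a * tpi A (u i) := by
        funext i; exact (hcomm a i).symm
      rw [tendsto_iff_norm_sub_tendsto_zero]
      have := happ a
      simpa using this
  · rintro ⟨⟨ι₁, φ₁, T, hne₁, hbdd, hbi, htend⟩, ⟨ι₂, φ₂, e, hne₂, hecomm, heapp⟩⟩
    classical
    set g : Set (Set (ι₁ × ι₂)) :=
      {s | ∃ (a : A) (ε : ℝ), 0 < ε ∧
        s = {p : ι₁ × ι₂ | ‖tpi A (T p.1 (e p.2)) * a - a‖ < ε}} with hg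
    have key : ∀ (α : ι₁) (β : ι₂) (a : A),
        tpi A (T α (e β)) * a = tpi A (T α (e β * a)) := by
      intro α β a
      rw [(hbi α (e β) a).2, tpi_tactR]
    have hneBot : (Filter.generate g).NeBot := by
      rw [Filter.generate_neBot_iff]
      intro t hts htfin
      have H : ∀ s, s ∈ t → ∃ (a : A) (ε : ℝ), 0 < ε ∧
          s = {p : ι₁ × ι₂ | ‖tpi A (T p.1 (e p.2)) * a - a‖ < ε} := fun s hs => hts hs
      choose! a ε hε hseq using H
      have hev2 : ∀ᶠ β in φ₂, ∀ s ∈ t, ‖e β * a s - a s‖ < ε s / 2 := by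
        rw [eventually_all_finite htfin]
        intro s hs
        have := Metric.tendsto_nhds.mp (heapp (a s)) (ε s / 2) (half_pos (hε s hs))
        simpa [dist_eq_norm] using this
      obtain ⟨β, hβ⟩ := hev2.exists
      have hev1 : ∀ᶠ α in φ₁, ∀ s ∈ t,
          ‖tpi A (T α (e β * a s)) - e β * a s‖ < ε s / 2 := by
        rw [eventually_all_finite htfin]
        intro s hs
        have := Metric.tendsto_nhds.mp (htend (e β * a s)) (ε s / 2) (half_pos (hε s hs))
        simpa [dist_eq_norm] using this
      obtain ⟨α, hα⟩ := hev1.exists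
      refine ⟨(α, β), ?_⟩
      intro s hs
      rw [hseq s hs]
      show ‖tpi A (T α (e β)) * a s - a s‖ < ε s
      calc ‖tpi A (T α (e β)) * a s - a s‖
          = ‖(tpi A (T α (e β * a s)) - e β * a s) + (e β * a s - a s)‖ := by
            rw [key α β (a s)]; congr 1; abel
        _ ≤ ‖tpi A (T α (e β * a s)) - e β * a s‖ + ‖e β * a s - a s‖ := norm_add_le _ _
        _ < ε s / 2 + ε s / 2 := add_lt_add (hα s hs) (hβ s hs)
        _ = ε s := by ring
    refine ⟨ι₁ × ι₂, Filter.generate g, fun p => T p.1 (e p.2), hneBot, ?_, ?_⟩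
    · intro a p
      have h1 : T p.1 (a * e p.2) = tactL A a (T p.1 (e p.2)) := (hbi p.1 a (e p.2)).1
      have h2 : T p.1 (e p.2 * a) = tactR A a (T p.1 (e p.2)) := (hbi p.1 (e p.2) a).2
      rw [← h1, ← h2, hecomm a p.2]
    · intro a
      rw [Metric.tendsto_nhds]
      intro ε hε
      have hmem : {p : ι₁ × ι₂ | ‖tpi A (T p.1 (e p.2)) * a - a‖ < ε} ∈ Filter.generate g :=
        Filter.mem_generate_of_mem ⟨a, ε, hε, rfl⟩
      filter_upwards [hmem] with p hp
      simpa [Real.dist_eq, abs_of_nonneg (norm_nonneg _)] using hp
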